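/- Let Δ₁, ..., Δ_k be d-dimensional constructible simplicial complexes such that the intersection of any two or more of them is constructible of dimension d−1. Then Δ₁ ∪ ⋯ ∪ Δ_k is constructible. -/

import Mathlib

open scoped BigOperators

/-- A (finite, abstract) simplicial complex on vertex set `V`:
a collection of finite subsets of `V` closed under taking subsets. -/
structure SC (V : Type*) where
  faces : Set (Finset V)
  down : ∀ ⦃s t : Finset V⦄, s ∈ faces → t ⊆ s → t ∈ faces

namespace SC

variable {V : Type*}

/-- The union of two simplicial complexes. -/
def union (Δ₁ Δ₂ : SC V) : SC V :=
  ⟨Δ₁.faces ∪ Δ₂.faces, by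
    rintro s t (h | h) hts
    · exact Or.inl (Δ₁.down h hts)
    · exact Or.inr (Δ₂.down h hts)⟩

/-- The intersection of two simplicial complexes. -/
def inter (Δ₁ Δ₂ : SC V) : SC V :=
  ⟨Δ₁.faces ∩ Δ₂.faces, fun _ _ h hts => ⟨Δ₁.down h.1 hts, Δ₂.down h.2 hts⟩⟩

/-- The simplex on a finite vertex set `s`: all subsets of `s`. -/
def simplex (s : Finset V) : SC V :=
  ⟨{t | t ⊆ s}, fun _ _ h h' => h'.trans h⟩

/-- The link of a face `F`: `{G \ F : G ∈ Δ, F ⊆ G}`. -/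
def link [DecidableEq V] (Δ : SC V) (F : Finset V) : SC V :=
  ⟨{G | Disjoint G F ∧ G ∪ F ∈ Δ.faces}, by
    rintro s t ⟨hd, hm⟩ hts
    exact ⟨hd.mono_left hts, Δ.down hm (Finset.union_subset_union hts le_rfl)⟩⟩

/-- The dimension of a simplicial complex, as an integer
(the complex `{∅}` has dimension `-1`). -/
noncomputable def dim (Δ : SC V) : ℤ :=
  sSup ((fun s : Finset V => (s.card : ℤ) - 1) '' Δ.faces)

/-- The geometric realization of a simplicial complex on a finite vertex set,
as a subspace of `V → ℝ`. -/
def realization [Fintype V] (Δ : SC V) : Set (V → ℝ) :=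
  {f | (∀ v, 0 ≤ f v) ∧ (∑ v, f v) = 1 ∧ ∃ s ∈ Δ.faces, ∀ v, f v ≠ 0 → v ∈ s}

end SC

/-- Constructibility (generalized): a `d`-dimensional complex is constructible
if it is a simplex, or the union of two `d`-dimensional constructible complexes
whose intersection is constructible of dimension at least `d - 1`. -/
inductive Constructible {V : Type*} : SC V → ℤ → Prop
  | simplex (s : Finset V) : Constructible (SC.simplex s) ((s.card : ℤ) - 1)
  | union {Δ₁ Δ₂ : SC V} {d e : ℤ} : Constructible Δ₁ d → Constructible Δ₂ d →
      d - 1 ≤ e → Constructible (SC.inter Δ₁ Δ₂) e →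
      Constructible (SC.union Δ₁ Δ₂) d

/-- A topological space is `k`-connected if it is nonempty (for `k ≥ -1`) and
all its homotopy groups `π_i` vanish for `0 ≤ i ≤ k`, at every basepoint. -/
def KConnected (k : ℤ) (X : Type*) [TopologicalSpace X] : Prop :=
  (-1 ≤ k → Nonempty X) ∧
    ∀ (x : X) (i : ℕ), (i : ℤ) ≤ k → Subsingleton (HomotopyGroup (Fin i) X x)

namespace SC

/-- The union of a finite family of simplicial complexes. -/
def unionFam {V ι : Type*} (S : Finset ι) (Δ : ι → SC V) : SC V :=
  ⟨{s | ∃ i ∈ S, s ∈ (Δ i).faces}, by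
    rintro s t ⟨i, hi, hs⟩ hts
    exact ⟨i, hi, (Δ i).down hs hts⟩⟩

/-- The intersection of a finite family of simplicial complexes. -/
def interFam {V ι : Type*} (S : Finset ι) (Δ : ι → SC V) : SC V :=
  ⟨{s | ∀ i ∈ S, s ∈ (Δ i).faces}, fun s t hs hts i hi => (Δ i).down (hs i hi) hts⟩

end SC

/-
Induct on the number of complexes. Split off `Δ j`: the union of the others is constructible
by induction, and its intersection with `Δ j` is the union of the complexes `Δ j ∩ Δ i`. Each
of these is constructible of dimension `d - 1`, and any two or more of them meet in an
intersection of three or more of the `Δ i`, again constructible of dimension `d - 1`. This is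
why the induction carries two dimension parameters `d - 1 ≤ e`: the family `Δ j ∩ Δ i` has
`d = e`.
-/

namespace SC

variable {V ι : Type*}

@[ext]
theorem ext {A B : SC V} (h : ∀ s, s ∈ A.faces ↔ s ∈ B.faces) : A = B := by
  obtain ⟨A, _⟩ := A
  obtain ⟨B, _⟩ := B
  congr
  exact Set.ext h

@[simp]
theorem unionFam_singleton (i : ι) (Δ : ι → SC V) : unionFam {i} Δ = Δ i := by
  ext s
  simp [unionFam]

theorem unionFam_cons (j : ι) (S : Finset ι) (hj : j ∉ S) (Δ : ι → SC V) :
    unionFam (S.cons j hj) Δ = union (Δ j) (unionFam S Δ) := by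
  ext s
  simp [unionFam, union]

theorem inter_unionFam (A : SC V) (S : Finset ι) (Δ : ι → SC V) :
    inter A (unionFam S Δ) = unionFam S (fun i => inter A (Δ i)) := by
  ext s
  simp only [inter, unionFam, Set.mem_inter_iff, Set.mem_ofPred_eq]
  exact ⟨fun ⟨hA, i, hi, hs⟩ => ⟨i, hi, hA, hs⟩,
    fun ⟨i, hi, hA, hs⟩ => ⟨hA, i, hi, hs⟩⟩

@[simp]
theorem interFam_singleton (i : ι) (Δ : ι → SC V) : interFam {i} Δ = Δ i := by
  ext s
  simp [interFam]

theorem interFam_cons (j : ι) (T : Finset ι) (hj : j ∉ T) (Δ : ι → SC V) :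
    interFam (T.cons j hj) Δ = inter (Δ j) (interFam T Δ) := by
  ext s
  simp [interFam, inter]

theorem interFam_inter_left {T : Finset ι} (hT : T.Nonempty) (A : SC V) (Δ : ι → SC V) :
    interFam T (fun i => inter A (Δ i)) = inter A (interFam T Δ) := by
  obtain ⟨i₀, hi₀⟩ := hT
  ext s
  simp only [interFam, inter, Set.mem_inter_iff, Set.mem_ofPred_eq]
  exact ⟨fun h => ⟨(h i₀ hi₀).1, fun i hi => (h i hi).2⟩,
    fun h i hi => ⟨h.1, h.2 i hi⟩⟩

end SC

theorem Constructible.unionFam {V ι : Type*} {S : Finset ι} (hS : S.Nonempty) {Δ : ι → SC V}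
    {d e : ℤ} (hde : d - 1 ≤ e) (hΔ : ∀ i ∈ S, Constructible (Δ i) d)
    (hinter : ∀ T ⊆ S, 2 ≤ T.card → Constructible (SC.interFam T Δ) e) :
    Constructible (SC.unionFam S Δ) d := by
  induction hS using Finset.Nonempty.cons_induction generalizing Δ d e with
  | singleton i => simpa using hΔ i (Finset.mem_singleton_self i)
  | cons j S hj hS ih =>
    have hrest : Constructible (SC.unionFam S Δ) d :=
      ih hde (fun i hi => hΔ i (Finset.mem_cons_of_mem hi))
        (fun T hT => hinter T (hT.trans (Finset.subset_cons hj)))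
    have hpair : ∀ i ∈ S, Constructible (SC.inter (Δ j) (Δ i)) e := by
      intro i hi
      have hji : j ∉ ({i} : Finset ι) := Finset.notMem_singleton.2 fun hji => hj (hji ▸ hi)
      simpa [SC.interFam_cons] using
        hinter (({i} : Finset ι).cons j hji)
          (Finset.cons_subset_cons.2 (Finset.singleton_subset_iff.2 hi))
          (by rw [Finset.card_cons, Finset.card_singleton])
    have hmeet : Constructible (SC.inter (Δ j) (SC.unionFam S Δ)) e := by
      rw [SC.inter_unionFam]
      refine ih (sub_le_self e zero_le_one) hpair fun T hT hT2 => ?_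
      rw [SC.interFam_inter_left (Finset.card_pos.1 (by omega)),
        ← SC.interFam_cons j T fun h => hj (hT h)]
      exact hinter _ (Finset.cons_subset_cons.2 hT)
        (hT2.trans (Finset.card_le_card (Finset.subset_cons _)))
    rw [SC.unionFam_cons]
    exact .union (hΔ j (Finset.mem_cons_self j S)) hrest hde hmeet

/-- If Δ₁, …, Δ_k are d-dimensional constructible simplicial complexes such
that the intersection of any two or more of them is constructible of
dimension d - 1, then their union is constructible. -/
theorem constructible_unionFam_dim_d_sub_one {V : Type*} (k : ℕ) (hk : 0 < k)
    (Δ : Fin k → SC V) (d : ℤ)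
    (h : ∀ i, Constructible (Δ i) d)
    (hint : ∀ S : Finset (Fin k), 2 ≤ S.card →
      Constructible (SC.interFam S Δ) (d - 1)) :
    Constructible (SC.unionFam Finset.univ Δ) d :=
  haveI : Nonempty (Fin k) := ⟨⟨0, hk⟩⟩
  Constructible.unionFam Finset.univ_nonempty le_rfl (fun i _ => h i) fun T _ => hint T
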